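/- Fix n ≥ 1 and a dyadic cube structure on ℝⁿ. Given a cube I, let 𝒲(I) be the Whitney family of maximal dyadic cubes S ⊊ I with 3S ⊂ I and inrdist(S,I) > 1. Then the doubled cubes {2S : S ∈ 𝒲(I)} have uniformly bounded overlap: every point x ∈ I belongs to at most 12·3ⁿ of the cubes 2S, S ∈ 𝒲(I). Consequently Σ_{S∈𝒲(I)} μ(2S) ≲_n μ(I) for any positive measure μ. -/

import Mathlib

open MeasureTheory
open scoped ENNReal

noncomputable section

/-- The dyadic cube of scale `k` (side length `2^{-k}`) and position `j` in `ℝⁿ`. -/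
def dyadicCube (n : ℕ) (k : ℤ) (j : Fin n → ℤ) : Set (EuclideanSpace ℝ (Fin n)) :=
  {x | ∀ i, (2:ℝ) ^ (-k) * (j i : ℝ) ≤ x i ∧ x i < (2:ℝ) ^ (-k) * ((j i : ℝ) + 1)}

/-- The position of the dyadic parent: the parent of the cube `(k, j)` is `(k-1, parentIdx j)`. -/
def parentIdx {n : ℕ} (j : Fin n → ℤ) : Fin n → ℤ := fun i => j i / 2

/-- The position of the child of the cube `(k, j)` selected by `b : Fin n → Bool`. -/
def childIdx {n : ℕ} (j : Fin n → ℤ) (b : Fin n → Bool) : Fin n → ℤ :=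
  fun i => 2 * j i + (if b i then 1 else 0)

/-- The inner boundary `𝔇_I` of a dyadic cube: the union of the boundaries of its children. -/
def innerBd (n : ℕ) (k : ℤ) (j : Fin n → ℤ) : Set (EuclideanSpace ℝ (Fin n)) :=
  ⋃ b : Fin n → Bool, frontier (dyadicCube n (k+1) (childIdx j b))

/-- The concentric dilate `λS` of the dyadic cube `S = (k, j)` by the factor `lam`. -/
def dilateCube (n : ℕ) (lam : ℝ) (k : ℤ) (j : Fin n → ℤ) :
    Set (EuclideanSpace ℝ (Fin n)) :=
  {x | ∀ i, |x i - (2:ℝ) ^ (-k) * ((j i : ℝ) + 1/2)| ≤ lam * (2:ℝ) ^ (-k) / 2}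

/-- The distance between two sets. -/
def setDist {X : Type*} [PseudoMetricSpace X] (s t : Set X) : ℝ :=
  sInf {d | ∃ x ∈ s, ∃ y ∈ t, d = dist x y}

/-- The defining property of the Whitney family of `I = (kI, jI)`: `S ⊊ I`, `3S ⊂ I` and
`inrdist(S, I) > 1`, i.e. `dist(S, 𝔇_I) > 0`. -/
def whitneyProp (n : ℕ) (kI : ℤ) (jI : Fin n → ℤ) (k : ℤ) (j : Fin n → ℤ) : Prop :=
  dyadicCube n k j ⊂ dyadicCube n kI jI ∧
    dilateCube n 3 k j ⊆ dyadicCube n kI jI ∧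
    0 < setDist (dyadicCube n k j) (innerBd n kI jI)

/-- Membership in the Whitney family `𝒲(I)`: `S` satisfies the Whitney property and is
maximal, i.e. its dyadic parent does not. -/
def whitney (n : ℕ) (kI : ℤ) (jI : Fin n → ℤ) (k : ℤ) (j : Fin n → ℤ) : Prop :=
  whitneyProp n kI jI k j ∧ ¬ whitneyProp n kI jI (k-1) (parentIdx j)

/-!
The inner boundary `𝔇_I` consists of the points of the closed cube `I` having some coordinate on
the grid of the children of `I`. If `x ∈ 2S` for a Whitney cube `S` of side `ℓ`, a point of `𝔇_I`
within `ℓ / 2` of `x` would have such a coordinate within `3ℓ / 2` of the centre of `S`; `S` being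
finer than the children of `I`, that coordinate is a face of `S`, whose part inside `3S ⊂ I` then
lies in `𝔇_I`, forcing `dist(S, 𝔇_I) = 0`. Conversely, maximality brings `𝔇_I` within `5ℓ` of `x`:
the parent `P` of `S` has either `3P ⊄ I`, and then `𝔇_I` separates `x` from a point of `3P \ I`,
or `dist(P, 𝔇_I) = 0`. Hence the Whitney cubes whose doubles contain `x` occupy at most 7
consecutive scales, each contributing at most `3ⁿ` cubes; integrating the overlap count gives the
measure bound.
-/

lemma setDist_le_dist {X : Type*} [PseudoMetricSpace X] {s t : Set X} {x y : X}
    (hx : x ∈ s) (hy : y ∈ t) : setDist s t ≤ dist x y :=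
  csInf_le ⟨0, by rintro _ ⟨_, _, _, _, rfl⟩; exact dist_nonneg⟩ ⟨x, hx, y, hy, rfl⟩

lemma setDist_le_zero_of_mem_closure {X : Type*} [PseudoMetricSpace X] {s t : Set X} {z : X}
    (hzs : z ∈ closure s) (hzt : z ∈ t) : setDist s t ≤ 0 := by
  refine le_of_forall_pos_lt_add fun ε hε => ?_
  obtain ⟨x, hx, hzx⟩ := Metric.mem_closure_iff.1 hzs ε hε
  rw [zero_add]
  exact (setDist_le_dist hx hzt).trans_lt (dist_comm z x ▸ hzx)

lemma exists_dist_lt_of_setDist_lt {X : Type*} [PseudoMetricSpace X] {s t : Set X} {r : ℝ}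
    (hs : s.Nonempty) (ht : t.Nonempty) (h : setDist s t < r) :
    ∃ x ∈ s, ∃ y ∈ t, dist x y < r := by
  obtain ⟨x, hx⟩ := hs
  obtain ⟨y, hy⟩ := ht
  obtain ⟨_, ⟨x, hx, y, hy, rfl⟩, hlt⟩ := exists_lt_of_csInf_lt (by exact ⟨_, x, hx, y, hy, rfl⟩) h
  exact ⟨x, hx, y, hy, hlt⟩

lemma MeasureTheory.tsum_measure_le_mul_measure_biUnion {α ι : Type*} [MeasurableSpace α]
    [Countable ι] (μ : Measure α) {s : Set ι} {A : ι → Set α} (hA : ∀ i, MeasurableSet (A i))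
    {N : ℕ} (hN : ∀ x ∈ ⋃ i ∈ s, A i, {i | i ∈ s ∧ x ∈ A i}.encard ≤ N) :
    ∑' i : s, μ (A i) ≤ N * μ (⋃ i ∈ s, A i) := by
  have hcount : ∀ x, ∑' i : s, (A i).indicator 1 x = ({i | i ∈ s ∧ x ∈ A i}.encard : ℝ≥0∞) := by
    intro x
    rw [← ENNReal.tsum_set_one, tsum_subtype s fun i => (A i).indicator 1 x,
      tsum_subtype {i | i ∈ s ∧ x ∈ A i} fun _ => (1 : ℝ≥0∞)]
    congr 1
    ext i
    by_cases hi : i ∈ s <;> by_cases hx : x ∈ A i <;> simp [hi, hx]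
  calc ∑' i : s, μ (A i) = ∑' i : s, ∫⁻ x, (A i).indicator 1 x ∂μ := by
        simp only [lintegral_indicator_one (hA _)]
    _ = ∫⁻ x, ∑' i : s, (A i).indicator 1 x ∂μ :=
        (lintegral_tsum fun i : s => (measurable_one.indicator (hA i)).aemeasurable).symm
    _ ≤ ∫⁻ x, N * (⋃ i ∈ s, A i).indicator 1 x ∂μ := lintegral_mono fun x => by
        rw [hcount]
        by_cases hx : x ∈ ⋃ i ∈ s, A i
        · rw [Set.indicator_of_mem hx, Pi.one_apply, mul_one]
          exact (ENat.toENNReal_le.2 (hN x hx)).trans_eq (ENat.toENNReal_coe N)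
        · have : {i | i ∈ s ∧ x ∈ A i} = ∅ :=
            Set.eq_empty_of_forall_notMem fun i hi => hx (Set.mem_biUnion hi.1 hi.2)
          simp [this]
    _ = N * μ (⋃ i ∈ s, A i) := by
        rw [lintegral_const_mul' _ _ (ENNReal.natCast_ne_top N),
          lintegral_indicator_one (MeasurableSet.biUnion s.to_countable fun i _ => hA i)]

lemma card_Icc_ceil_floor_add_two_le (s : ℝ) : (Finset.Icc ⌈s⌉ ⌊s + 2⌋).card ≤ 3 := by
  have h1 : ⌊s + 2⌋ = ⌊s⌋ + 2 := by exact_mod_cast Int.floor_add_intCast s 2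
  have h2 := Int.floor_le_ceil s
  rw [Int.card_Icc]
  omega

lemma two_zpow_neg_sub_one (k : ℤ) : (2:ℝ) ^ (-(k - 1)) = 2 * (2:ℝ) ^ (-k) := by
  rw [neg_sub, sub_eq_add_neg, zpow_add₀ two_ne_zero, zpow_one, mul_comm]

section

variable {n : ℕ}

lemma mem_dyadicCube_iff_floor {k : ℤ} {j : Fin n → ℤ} {x : EuclideanSpace ℝ (Fin n)} :
    x ∈ dyadicCube n k j ↔ ∀ i, ⌊(2:ℝ) ^ k * x i⌋ = j i := by
  have h2k : (0:ℝ) < (2:ℝ) ^ k := by positivity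
  refine forall_congr' fun i => ?_
  rw [Int.floor_eq_iff, zpow_neg, inv_mul_le_iff₀ h2k, lt_inv_mul_iff₀ h2k]

lemma dyadicCube_subset_of_le {k k' : ℤ} (hk : k ≤ k') (j' : Fin n → ℤ) :
    dyadicCube n k' j' ⊆ dyadicCube n k (fun i => j' i / 2 ^ (k' - k).toNat) := by
  intro x hx
  rw [mem_dyadicCube_iff_floor] at hx ⊢
  intro i
  have h : (2:ℝ) ^ k * x i = (2:ℝ) ^ k' * x i / ((2 ^ (k' - k).toNat : ℕ) : ℝ) := by
    rw [Nat.cast_pow, Nat.cast_ofNat, ← zpow_natCast, Int.toNat_of_nonneg (by omega),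
      mul_div_right_comm, ← zpow_sub₀ two_ne_zero, sub_sub_cancel]
  rw [h, Int.floor_div_natCast, hx i]
  push_cast
  rfl

lemma eq_of_mem_dyadicCube {k : ℤ} {j j' : Fin n → ℤ} {x : EuclideanSpace ℝ (Fin n)}
    (hx : x ∈ dyadicCube n k j) (hx' : x ∈ dyadicCube n k j') : j = j' := by
  rw [mem_dyadicCube_iff_floor] at hx hx'
  exact funext fun i => (hx i).symm.trans (hx' i)

lemma dyadicCube_subset_parent (k : ℤ) (j : Fin n → ℤ) :
    dyadicCube n k j ⊆ dyadicCube n (k - 1) (parentIdx j) := by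
  have h := dyadicCube_subset_of_le (sub_le_self k zero_le_one) j
  simp only [sub_sub_cancel, Int.toNat_one, pow_one] at h
  exact h

lemma dyadicCube_child_subset (k : ℤ) (j : Fin n → ℤ) (b : Fin n → Bool) :
    dyadicCube n (k + 1) (childIdx j b) ⊆ dyadicCube n k j := by
  convert dyadicCube_subset_of_le (le_add_of_nonneg_right zero_le_one) (childIdx j b) using 2
  ext i
  simp only [childIdx, add_sub_cancel_left, Int.toNat_one, pow_one]
  split_ifs <;> omega

lemma center_mem_dyadicCube (k : ℤ) (j : Fin n → ℤ) :
    WithLp.toLp 2 (fun i => (2:ℝ) ^ (-k) * (j i + 1 / 2)) ∈ dyadicCube n k j := by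
  have hu : (0:ℝ) < (2:ℝ) ^ (-k) := by positivity
  intro i
  constructor <;> nlinarith

lemma lt_of_dyadicCube_ssubset {k kI : ℤ} {j jI : Fin n → ℤ}
    (h : dyadicCube n k j ⊂ dyadicCube n kI jI) : kI < k := by
  by_contra! hk
  have hI := dyadicCube_subset_of_le hk jI
  have hc := center_mem_dyadicCube k j
  rw [← eq_of_mem_dyadicCube hc (hI (h.1 hc))] at hI
  exact h.2 hI

lemma nonempty_of_dyadicCube_ssubset {k kI : ℤ} {j jI : Fin n → ℤ}
    (h : dyadicCube n k j ⊂ dyadicCube n kI jI) : Nonempty (Fin n) := by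
  by_contra! hn
  exact h.2 fun x _ i => isEmptyElim i

lemma dyadicCube_eq_preimage_pi (k : ℤ) (j : Fin n → ℤ) :
    dyadicCube n k j = EuclideanSpace.equiv (Fin n) ℝ ⁻¹'
      Set.univ.pi fun i => Set.Ico ((2:ℝ) ^ (-k) * j i) ((2:ℝ) ^ (-k) * (j i + 1)) := by
  ext; simp only [dyadicCube, Set.mem_preimage, Set.mem_univ_pi, Set.mem_Ico]; rfl

lemma mem_closure_dyadicCube_iff {k : ℤ} {j : Fin n → ℤ} {x : EuclideanSpace ℝ (Fin n)} :
    x ∈ closure (dyadicCube n k j) ↔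
      ∀ i, x i ∈ Set.Icc ((2:ℝ) ^ (-k) * j i) ((2:ℝ) ^ (-k) * (j i + 1)) := by
  have hu : (0:ℝ) < (2:ℝ) ^ (-k) := by positivity
  rw [dyadicCube_eq_preimage_pi, ← ContinuousLinearEquiv.preimage_closure, closure_pi_set]
  simp only [Set.mem_preimage, Set.mem_univ_pi]
  refine forall_congr' fun i => ?_
  rw [closure_Ico (mul_lt_mul_of_pos_left (lt_add_one _) hu).ne]
  rfl

lemma mem_interior_dyadicCube_iff {k : ℤ} {j : Fin n → ℤ} {x : EuclideanSpace ℝ (Fin n)} :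
    x ∈ interior (dyadicCube n k j) ↔
      ∀ i, x i ∈ Set.Ioo ((2:ℝ) ^ (-k) * j i) ((2:ℝ) ^ (-k) * (j i + 1)) := by
  let e := EuclideanSpace.equiv (Fin n) ℝ
  rw [dyadicCube_eq_preimage_pi, ← e.isOpenMap.preimage_interior_eq_interior_preimage e.continuous,
    interior_pi_set Set.finite_univ]
  simp only [Set.mem_preimage, Set.mem_univ_pi]
  refine forall_congr' fun i => ?_
  rw [interior_Ico]
  rfl

lemma dilateCube_one (k : ℤ) (j : Fin n → ℤ) :
    dilateCube n 1 k j = closure (dyadicCube n k j) := by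
  ext x
  rw [mem_closure_dyadicCube_iff]
  refine forall_congr' fun i => ?_
  rw [abs_le, Set.mem_Icc]
  constructor <;> rintro ⟨h1, h2⟩ <;> constructor <;> linarith

lemma dilateCube_mono {a b : ℝ} (hab : a ≤ b) (k : ℤ) (j : Fin n → ℤ) :
    dilateCube n a k j ⊆ dilateCube n b k j :=
  fun _ hx i => (hx i).trans (by gcongr)

lemma dilateCube_not_subset [Nonempty (Fin n)] {lam : ℝ} (hlam : 1 ≤ lam) (k : ℤ)
    (j : Fin n → ℤ) :
    ¬ dilateCube n lam k j ⊆ dyadicCube n k j := by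
  have hu : (0:ℝ) < (2:ℝ) ^ (-k) := by positivity
  intro h
  obtain ⟨i⟩ := ‹Nonempty (Fin n)›
  have hmem : (WithLp.toLp 2 fun i => (2:ℝ) ^ (-k) * (j i + 1)) ∈ dilateCube n lam k j :=
    fun i => by
    show |(2:ℝ) ^ (-k) * (j i + 1) - _| ≤ _
    rw [abs_le]
    constructor <;> nlinarith
  exact (h hmem i).2.ne rfl

lemma isClosed_dilateCube (lam : ℝ) (k : ℤ) (j : Fin n → ℤ) :
    IsClosed (dilateCube n lam k j) := by
  simp only [dilateCube, Set.ofPred_forall]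
  exact isClosed_iInter fun i => isClosed_le (by fun_prop) continuous_const

def dyadicGrid (k : ℤ) : Set ℝ := Set.range fun m : ℤ => (2:ℝ) ^ (-k) * m

lemma dyadicGrid_mono {k k' : ℤ} (hk : k ≤ k') : dyadicGrid k ⊆ dyadicGrid k' := by
  rintro _ ⟨m, rfl⟩
  refine ⟨m * 2 ^ (k' - k).toNat, ?_⟩
  push_cast
  rw [← zpow_natCast, Int.toNat_of_nonneg (by omega), mul_left_comm, ← mul_assoc, mul_assoc,
    ← zpow_add₀ two_ne_zero]
  ring_nf

lemma notMem_Ioo_of_mem_dyadicGrid {k : ℤ} {t : ℝ} (ht : t ∈ dyadicGrid k) (c : ℤ) :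
    t ∉ Set.Ioo ((2:ℝ) ^ (-k) * c) ((2:ℝ) ^ (-k) * (c + 1)) := by
  have hu : (0:ℝ) < (2:ℝ) ^ (-k) := by positivity
  obtain ⟨m, rfl⟩ := ht
  rintro ⟨h1, h2⟩
  have h1' : c < m := by exact_mod_cast lt_of_mul_lt_mul_left h1 hu.le
  have h2' : m < c + 1 := by exact_mod_cast lt_of_mul_lt_mul_left h2 hu.le
  omega

lemma mem_Icc_of_mem_dyadicGrid {k : ℤ} {t : ℝ} (ht : t ∈ dyadicGrid k) {c : ℤ}
    (htc : |t - (2:ℝ) ^ (-k) * (c + 1 / 2)| < 3 * (2:ℝ) ^ (-k) / 2) :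
    t ∈ Set.Icc ((2:ℝ) ^ (-k) * c) ((2:ℝ) ^ (-k) * (c + 1)) := by
  have hu : (0:ℝ) < (2:ℝ) ^ (-k) := by positivity
  obtain ⟨m, rfl⟩ := ht
  rw [abs_lt] at htc
  have h1 : ((c - 1 : ℤ) : ℝ) < m := lt_of_mul_lt_mul_left (by push_cast; linarith) hu.le
  have h2 : (m : ℝ) < (c + 2 : ℤ) := lt_of_mul_lt_mul_left (by push_cast; linarith) hu.le
  norm_cast at h1 h2
  obtain rfl | rfl : m = c ∨ m = c + 1 := by omega
  all_goals push_cast; constructor <;> linarith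

lemma mem_innerBd_iff {k : ℤ} {j : Fin n → ℤ} {y : EuclideanSpace ℝ (Fin n)} :
    y ∈ innerBd n k j ↔ y ∈ closure (dyadicCube n k j) ∧ ∃ i, y i ∈ dyadicGrid (k + 1) := by
  constructor
  · intro hy
    obtain ⟨b, hyb⟩ := Set.mem_iUnion.1 hy
    refine ⟨closure_mono (dyadicCube_child_subset k j b) hyb.1, ?_⟩
    have hint := hyb.2
    simp only [mem_interior_dyadicCube_iff, Set.mem_Ioo, not_forall, not_and, not_lt] at hint
    obtain ⟨i, hi⟩ := hint
    obtain ⟨hlo, hhi⟩ := mem_closure_dyadicCube_iff.1 hyb.1 i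
    refine ⟨i, ?_⟩
    rcases hlo.eq_or_lt with hlo | hlo
    · exact ⟨childIdx j b i, hlo⟩
    · exact ⟨childIdx j b i + 1, by push_cast; exact le_antisymm (hi hlo) hhi⟩
  · rintro ⟨hy, i₀, hgrid⟩
    have h2 := two_zpow_neg_sub_one (k + 1)
    rw [add_sub_cancel_right] at h2
    let b : Fin n → Bool := fun i => decide ((2:ℝ) ^ (-(k + 1)) * (2 * j i + 1) ≤ y i)
    refine Set.mem_iUnion.2 ⟨b, mem_closure_dyadicCube_iff.2 fun i => ?_, fun hint => ?_⟩
    · obtain ⟨h1, h3⟩ := mem_closure_dyadicCube_iff.1 hy i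
      rw [h2] at h1 h3
      by_cases hb : (2:ℝ) ^ (-(k + 1)) * (2 * j i + 1) ≤ y i
      · simp only [childIdx, b, hb, decide_true, if_true, Set.mem_Icc]
        push_cast
        constructor <;> linarith
      · simp only [childIdx, b, hb, decide_false, Bool.false_eq_true, if_false, Set.mem_Icc]
        push_cast
        constructor <;> linarith
    · exact notMem_Ioo_of_mem_dyadicGrid hgrid _ (mem_interior_dyadicCube_iff.1 hint i₀)

def updateCoord (x : EuclideanSpace ℝ (Fin n)) (i : Fin n) (t : ℝ) : EuclideanSpace ℝ (Fin n) :=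
  WithLp.toLp 2 (Function.update x.ofLp i t)

@[simp] lemma updateCoord_apply (x : EuclideanSpace ℝ (Fin n)) (i i' : Fin n) (t : ℝ) :
    updateCoord x i t i' = Function.update x.ofLp i t i' := rfl

lemma dist_updateCoord (x : EuclideanSpace ℝ (Fin n)) (i : Fin n) (t : ℝ) :
    dist x (updateCoord x i t) = |x i - t| := by
  rw [EuclideanSpace.dist_eq, Finset.sum_eq_single i (fun i' _ hi' => by simp [hi'])
    (fun h => absurd (Finset.mem_univ i) h)]
  simp [Real.dist_eq, Real.sqrt_sq_eq_abs]

lemma exists_mem_innerBd_dist_eq {k : ℤ} {j : Fin n → ℤ} {x : EuclideanSpace ℝ (Fin n)}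
    (hx : x ∈ closure (dyadicCube n k j)) (i : Fin n) {t : ℝ} (ht : t ∈ dyadicGrid (k + 1))
    (htI : t ∈ Set.Icc ((2:ℝ) ^ (-k) * j i) ((2:ℝ) ^ (-k) * (j i + 1))) :
    ∃ y ∈ innerBd n k j, dist x y = |x i - t| := by
  refine ⟨updateCoord x i t, mem_innerBd_iff.2 ⟨mem_closure_dyadicCube_iff.2 fun i' => ?_, i, ?_⟩,
    dist_updateCoord x i t⟩
  · rcases eq_or_ne i' i with rfl | hi'
    · simpa using htI
    · simpa [hi'] using mem_closure_dyadicCube_iff.1 hx i'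
  · simpa using ht

lemma half_side_le_dist_of_mem_innerBd {kI k : ℤ} {jI j : Fin n → ℤ}
    (hS : whitneyProp n kI jI k j) {x y : EuclideanSpace ℝ (Fin n)}
    (hx : x ∈ dilateCube n 2 k j) (hy : y ∈ innerBd n kI jI) :
    (2:ℝ) ^ (-k) / 2 ≤ dist x y := by
  by_contra! hxy
  obtain ⟨-, i, hyi⟩ := mem_innerBd_iff.1 hy
  have hyc : |y i - (2:ℝ) ^ (-k) * (j i + 1 / 2)| < 3 * (2:ℝ) ^ (-k) / 2 := by
    have hxy' : |y i - x i| < (2:ℝ) ^ (-k) / 2 := by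
      rw [← Real.dist_eq, dist_comm]; exact (PiLp.dist_apply_le x y i).trans_lt hxy
    have := abs_sub_le (y i) (x i) ((2:ℝ) ^ (-k) * (j i + 1 / 2))
    linarith [hx i]
  set z := updateCoord (WithLp.toLp 2 fun i => (2:ℝ) ^ (-k) * (j i + 1 / 2)) i (y i)
  have hzS : z ∈ closure (dyadicCube n k j) := mem_closure_dyadicCube_iff.2 fun i' => by
    rcases eq_or_ne i' i with rfl | hi'
    · simpa [z] using mem_Icc_of_mem_dyadicGrid
        (dyadicGrid_mono (Int.add_one_le_of_lt (lt_of_dyadicCube_ssubset hS.1)) hyi) hyc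
    · have hc := center_mem_dyadicCube k j i'
      simpa [z, hi'] using And.intro hc.1 hc.2.le
  have hzI : z ∈ dyadicCube n kI jI :=
    hS.2.1 (dilateCube_mono (by norm_num) k j ((dilateCube_one k j).symm ▸ hzS))
  have hz : z ∈ innerBd n kI jI := mem_innerBd_iff.2 ⟨subset_closure hzI, i, by simpa [z] using hyi⟩
  exact hS.2.2.not_ge (setDist_le_zero_of_mem_closure hzS hz)

lemma zpow_neg_mul_mem_dyadicGrid_succ (k m : ℤ) : (2:ℝ) ^ (-k) * m ∈ dyadicGrid (k + 1) :=
  dyadicGrid_mono (le_add_of_nonneg_right zero_le_one) ⟨m, rfl⟩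

lemma abs_sub_center_le_of_mem_dyadicCube {k : ℤ} {j : Fin n → ℤ}
    {x : EuclideanSpace ℝ (Fin n)} (hx : x ∈ dyadicCube n k j) (i : Fin n) :
    |x i - (2:ℝ) ^ (-k) * (j i + 1 / 2)| ≤ (2:ℝ) ^ (-k) / 2 :=
  (((dilateCube_one k j).symm ▸ subset_closure hx : x ∈ dilateCube n 1 k j) i).trans_eq
    (by rw [one_mul])

lemma exists_mem_innerBd_dist_le_of_notMem {kI : ℤ} {jI : Fin n → ℤ}
    {x w : EuclideanSpace ℝ (Fin n)} (hxI : x ∈ dyadicCube n kI jI)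
    (hw : w ∉ dyadicCube n kI jI) : ∃ i, ∃ y ∈ innerBd n kI jI, dist x y ≤ |x i - w i| := by
  simp only [dyadicCube, Set.mem_ofPred_eq, not_forall, not_and_or, not_le, not_lt] at hw
  obtain ⟨i, hi⟩ := hw
  obtain ⟨hlo, hhi⟩ := hxI i
  refine ⟨i, ?_⟩
  rcases hi with hi | hi
  · obtain ⟨y, hy, hxy⟩ := exists_mem_innerBd_dist_eq (subset_closure hxI) i
      (zpow_neg_mul_mem_dyadicGrid_succ kI (jI i)) ⟨le_rfl, by gcongr; simp⟩
    refine ⟨y, hy, hxy ▸ ?_⟩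
    rw [abs_of_nonneg (by linarith), abs_of_nonneg (by linarith)]
    linarith
  · obtain ⟨y, hy, hxy⟩ := exists_mem_innerBd_dist_eq (subset_closure hxI) i
      (zpow_neg_mul_mem_dyadicGrid_succ kI (jI i + 1))
      (by push_cast; exact ⟨by gcongr; simp, le_rfl⟩)
    refine ⟨y, hy, hxy ▸ ?_⟩
    push_cast
    rw [abs_of_nonpos (by linarith), abs_of_nonpos (by linarith)]
    linarith

lemma exists_mem_innerBd_dist_le_of_mem_innerBd {kI : ℤ} {jI : Fin n → ℤ}
    {x z : EuclideanSpace ℝ (Fin n)} (hx : x ∈ closure (dyadicCube n kI jI))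
    (hz : z ∈ innerBd n kI jI) : ∃ i, ∃ y ∈ innerBd n kI jI, dist x y ≤ |x i - z i| := by
  obtain ⟨hzI, i, hgrid⟩ := mem_innerBd_iff.1 hz
  obtain ⟨y, hy, hxy⟩ :=
    exists_mem_innerBd_dist_eq hx i hgrid (mem_closure_dyadicCube_iff.1 hzI i)
  exact ⟨i, y, hy, hxy.le⟩

lemma exists_mem_innerBd_dist_le_of_whitney {kI k : ℤ} {jI j : Fin n → ℤ}
    (hS : whitney n kI jI k j) {x : EuclideanSpace ℝ (Fin n)} (hx : x ∈ dilateCube n 2 k j)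
    (hxI : x ∈ dyadicCube n kI jI) :
    ∃ y ∈ innerBd n kI jI, dist x y ≤ 5 * (2:ℝ) ^ (-k) := by
  have hn := nonempty_of_dyadicCube_ssubset hS.1.1
  have hu : (0:ℝ) < (2:ℝ) ^ (-(k - 1)) := by positivity
  obtain ⟨z, hz, i, y, hy, hxy⟩ : ∃ z ∈ dilateCube n 3 (k - 1) (parentIdx j),
      ∃ i, ∃ y ∈ innerBd n kI jI, dist x y ≤ |x i - z i| := by
    by_cases h3 : dilateCube n 3 (k - 1) (parentIdx j) ⊆ dyadicCube n kI jI
    · have hP3 : dyadicCube n (k - 1) (parentIdx j) ⊆ dilateCube n 3 (k - 1) (parentIdx j) :=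
        subset_closure.trans ((dilateCube_one _ _).symm ▸ dilateCube_mono (by norm_num) _ _)
      have hPI : dyadicCube n (k - 1) (parentIdx j) ⊂ dyadicCube n kI jI :=
        ⟨hP3.trans h3, fun hIP => dilateCube_not_subset (by norm_num) _ _ (h3.trans hIP)⟩
      have hd : setDist (dyadicCube n (k - 1) (parentIdx j)) (innerBd n kI jI) <
          (2:ℝ) ^ (-(k - 1)) / 2 :=
        (not_lt.1 fun h => hS.2 ⟨hPI, h3, h⟩).trans_lt (by positivity)
      obtain ⟨i₀⟩ := hn
      obtain ⟨p, hp, z, hz, hpz⟩ := exists_dist_lt_of_setDist_lt ⟨_, center_mem_dyadicCube _ _⟩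
        ((exists_mem_innerBd_dist_eq (subset_closure hxI) i₀
          (zpow_neg_mul_mem_dyadicGrid_succ kI (jI i₀)) ⟨le_rfl, by gcongr; simp⟩).imp
            fun _ h => h.1) hd
      refine ⟨z, fun i => ?_, exists_mem_innerBd_dist_le_of_mem_innerBd (subset_closure hxI) hz⟩
      have h1 := abs_sub_center_le_of_mem_dyadicCube hp i
      have h2 : |z i - p i| < (2:ℝ) ^ (-(k - 1)) / 2 := by
        rw [← Real.dist_eq, dist_comm]; exact (PiLp.dist_apply_le p z i).trans_lt hpz
      linarith [abs_sub_le (z i) (p i) ((2:ℝ) ^ (-(k - 1)) * (parentIdx j i + 1 / 2))]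
    · obtain ⟨w, hw, hwI⟩ := Set.not_subset.1 h3
      exact ⟨w, hw, exists_mem_innerBd_dist_le_of_notMem hxI hwI⟩
  have hc := abs_sub_center_le_of_mem_dyadicCube
    (dyadicCube_subset_parent k j (center_mem_dyadicCube k j)) i
  have hzi := hz i
  rw [two_zpow_neg_sub_one] at hc hzi
  refine ⟨y, hy, hxy.trans ?_⟩
  linarith [hx i, abs_sub_le (x i) ((2:ℝ) ^ (-k) * (j i + 1 / 2)) (z i),
    abs_sub_le ((2:ℝ) ^ (-k) * (j i + 1 / 2)) (2 * (2:ℝ) ^ (-k) * (parentIdx j i + 1 / 2)) (z i),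
    abs_sub_comm (z i) (2 * (2:ℝ) ^ (-k) * (parentIdx j i + 1 / 2))]

lemma le_add_three_of_whitney {kI k k' : ℤ} {jI j j' : Fin n → ℤ}
    {x : EuclideanSpace ℝ (Fin n)} (hxI : x ∈ dyadicCube n kI jI)
    (hS : whitney n kI jI k j) (hx : x ∈ dilateCube n 2 k j)
    (hS' : whitney n kI jI k' j') (hx' : x ∈ dilateCube n 2 k' j') : k' ≤ k + 3 := by
  obtain ⟨y, hy, hxy⟩ := exists_mem_innerBd_dist_le_of_whitney hS' hx' hxI
  have h := (half_side_le_dist_of_mem_innerBd hS.1 hx hy).trans hxy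
  have hlt : (2:ℝ) ^ (-k) < (2:ℝ) ^ (-k' + 4) := by
    rw [zpow_add₀ two_ne_zero]
    linarith [show (0:ℝ) < (2:ℝ) ^ (-k') by positivity, show ((2:ℝ) ^ (4:ℤ)) = 16 by norm_num]
  have := (zpow_lt_zpow_iff_right₀ one_lt_two).1 hlt
  omega

lemma mem_Icc_of_mem_dilateCube_two {k : ℤ} {j : Fin n → ℤ} {x : EuclideanSpace ℝ (Fin n)}
    (hx : x ∈ dilateCube n 2 k j) (i : Fin n) :
    j i ∈ Finset.Icc ⌈(2:ℝ) ^ k * x i - 3 / 2⌉ ⌊(2:ℝ) ^ k * x i - 3 / 2 + 2⌋ := by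
  have h2k : (0:ℝ) < (2:ℝ) ^ k := by positivity
  have e : (2:ℝ) ^ k * (2:ℝ) ^ (-k) = 1 := by
    rw [← zpow_add₀ two_ne_zero, add_neg_cancel, zpow_zero]
  have hx' : |(2:ℝ) ^ k * x i - (j i + 1 / 2)| ≤ 1 :=
    calc _ = |(2:ℝ) ^ k * (x i - (2:ℝ) ^ (-k) * (j i + 1 / 2))| := by
          congr 1; linear_combination (j i + 1 / 2 : ℝ) * e
      _ = (2:ℝ) ^ k * |x i - (2:ℝ) ^ (-k) * (j i + 1 / 2)| := by rw [abs_mul, abs_of_pos h2k]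
      _ ≤ (2:ℝ) ^ k * (2 * (2:ℝ) ^ (-k) / 2) := by gcongr; exact hx i
      _ = 1 := by linear_combination e
  rw [abs_le] at hx'
  exact Finset.mem_Icc.2 ⟨Int.ceil_le.2 (by linarith), Int.le_floor.2 (by linarith)⟩

lemma encard_whitney_mem_dilateCube_two_le {kI : ℤ} {jI : Fin n → ℤ}
    {x : EuclideanSpace ℝ (Fin n)} (hxI : x ∈ dyadicCube n kI jI) :
    {p : ℤ × (Fin n → ℤ) | whitney n kI jI p.1 p.2 ∧ x ∈ dilateCube n 2 p.1 p.2}.encard ≤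
      7 * 3 ^ n := by
  rcases Set.eq_empty_or_nonempty
    {p : ℤ × (Fin n → ℤ) | whitney n kI jI p.1 p.2 ∧ x ∈ dilateCube n 2 p.1 p.2} with h | h
  · simp [h]
  obtain ⟨⟨k₀, j₀⟩, hS₀, hx₀⟩ := h
  let T : Finset (ℤ × (Fin n → ℤ)) := (Finset.Icc (k₀ - 3) (k₀ + 3)).biUnion fun k =>
    {k} ×ˢ Fintype.piFinset fun i =>
      Finset.Icc ⌈(2:ℝ) ^ k * x i - 3 / 2⌉ ⌊(2:ℝ) ^ k * x i - 3 / 2 + 2⌋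
  have hT : T.card ≤ 7 * 3 ^ n := by
    refine Finset.card_biUnion_le.trans
      ((Finset.sum_le_card_nsmul _ _ (3 ^ n) fun k _ => ?_).trans ?_)
    · rw [Finset.card_product, Finset.card_singleton, one_mul, Fintype.card_piFinset]
      exact (Finset.prod_le_prod' fun i _ => card_Icc_ceil_floor_add_two_le _).trans_eq (by simp)
    · rw [Int.card_Icc, show k₀ + 3 + 1 - (k₀ - 3) = 7 by ring, smul_eq_mul]
      rfl
  calc _ ≤ (T : Set (ℤ × (Fin n → ℤ))).encard := Set.encard_le_encard fun ⟨k, j⟩ ⟨hS, hx⟩ =>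
        Finset.mem_biUnion.2 ⟨k,
          Finset.mem_Icc.2 ⟨by linarith [le_add_three_of_whitney hxI hS hx hS₀ hx₀],
            le_add_three_of_whitney hxI hS₀ hx₀ hS hx⟩,
          Finset.mem_product.2 ⟨Finset.mem_singleton_self k,
            Fintype.mem_piFinset.2 (mem_Icc_of_mem_dilateCube_two hx)⟩⟩
    _ = T.card := Set.encard_coe_eq_coe_finsetCard T
    _ ≤ 7 * 3 ^ n := by exact_mod_cast hT

end

/-- The doubled Whitney cubes `{2S : S ∈ 𝒲(I)}` have bounded overlap:
every `x ∈ I` lies in at most `12·3ⁿ` of them; consequently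
`Σ_{S ∈ 𝒲(I)} μ(2S) ≤ 12·3ⁿ μ(I)` for every positive measure `μ`. -/
theorem whitney_bounded_overlap (n : ℕ) (kI : ℤ) (jI : Fin n → ℤ) :
    (∀ x ∈ dyadicCube n kI jI,
      {p : ℤ × (Fin n → ℤ) | whitney n kI jI p.1 p.2 ∧
          x ∈ dilateCube n 2 p.1 p.2}.Finite ∧
      {p : ℤ × (Fin n → ℤ) | whitney n kI jI p.1 p.2 ∧
          x ∈ dilateCube n 2 p.1 p.2}.ncard ≤ 12 * 3 ^ n) ∧
    (∀ μ : Measure (EuclideanSpace ℝ (Fin n)),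
      ∑' p : {p : ℤ × (Fin n → ℤ) // whitney n kI jI p.1 p.2},
          μ (dilateCube n 2 p.1.1 p.1.2) ≤
        (12 * 3 ^ n : ℝ≥0∞) * μ (dyadicCube n kI jI)) := by
  have hcount : ∀ x ∈ dyadicCube n kI jI, {p : ℤ × (Fin n → ℤ) | whitney n kI jI p.1 p.2 ∧
      x ∈ dilateCube n 2 p.1 p.2}.encard ≤ (12 * 3 ^ n : ℕ) := fun x hx =>
    (encard_whitney_mem_dilateCube_two_le hx).trans (by push_cast; gcongr; norm_num)
  have h2I : ⋃ p ∈ {p : ℤ × (Fin n → ℤ) | whitney n kI jI p.1 p.2}, dilateCube n 2 p.1 p.2 ⊆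
      dyadicCube n kI jI :=
    Set.iUnion₂_subset fun p hp => (dilateCube_mono (by norm_num) _ _).trans hp.1.2.1
  refine ⟨fun x hx => ⟨Set.finite_of_encard_le_coe (hcount x hx),
    ENat.toNat_le_of_le_natCast (hcount x hx)⟩, fun μ => ?_⟩
  refine (tsum_measure_le_mul_measure_biUnion μ
    (s := {p : ℤ × (Fin n → ℤ) | whitney n kI jI p.1 p.2})
    (A := fun p : ℤ × (Fin n → ℤ) => dilateCube n 2 p.1 p.2)
    (fun p => (isClosed_dilateCube 2 p.1 p.2).measurableSet) fun x hx => hcount x (h2I hx)).trans ?_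
  push_cast
  gcongr
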